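/- arXiv:1310.8422 — 4 statements merged into one kernel-verified Lean document; each statement's English description precedes it below -/
import Mathlib

section
/- Let (X,T,μ) be an ergodic measure-preserving dynamical system on a probability space, let Y ⊆ X have positive measure, let τ be the first return time to Y and T̂ = T^τ the first return map preserving the normalized measure μ_Y. If for every nonzero f ∈ L²(μ_Y) and t ∈ [0,2π), the relation f∘T̂ = e^{itτ} f implies t = 0 and f is constant (aperiodicity of the return time), then (X,T,μ) is weakly mixing, i.e. any g ∈ L²(μ) with g∘T = e^{it}g for some t ∈ [0,2π) forces t = 0 and g constant. -/
open MeasureTheory Filter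
open scoped ENNReal Topology

/-!
An eigenfunction `g ∘ T = e^{it} g` of `T` satisfies `g ∘ T^n = e^{itn} g` for every `n`, so
its restriction to `Y` is an eigenfunction of the first return map: `f ∘ T̂ = e^{itτ} f`.
By ergodicity `‖g‖` is an a.e. nonzero constant, so this restriction does not vanish on `Y`, and
aperiodicity forces `t = 0`; then `g` is `T`-invariant, hence constant by ergodicity.
-/

section Eigenfunction

variable {X : Type*} [MeasurableSpace X] {μ : Measure X} {T : X → X}

theorem ae_forall_iterate_eq_pow_mul {M : Type*} [Monoid M]
    (hT : Measure.QuasiMeasurePreserving T μ μ) {g : X → M} {c : M}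
    (hg : ∀ᵐ x ∂μ, g (T x) = c * g x) :
    ∀ᵐ x ∂μ, ∀ n : ℕ, g (T^[n] x) = c ^ n * g x := by
  rw [ae_all_iff]
  intro n
  induction n with
  | zero => simp
  | succ n ih =>
    filter_upwards [hg, hT.ae ih] with x hx hTx
    rw [Function.iterate_succ_apply, hTx, hx, pow_succ, mul_assoc]

theorem QuasiErgodic.exists_norm_ae_eq_const_of_eigen {E : Type*} [NormedDivisionRing E]
    (hErg : QuasiErgodic T μ) {g : X → E} {c : E} (hc : ‖c‖ = 1)
    (hgm : AEStronglyMeasurable g μ) (hg : ∀ᵐ x ∂μ, g (T x) = c * g x) :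
    ∃ r : ℝ, ∀ᵐ x ∂μ, ‖g x‖ = r :=
  hErg.ae_eq_const_of_ae_eq_comp_ae hgm.norm <| by
    filter_upwards [hg] with x hx
    simp only [Function.comp_apply, hx, norm_mul, hc, one_mul]

end Eigenfunction

theorem MeasureTheory.Measure.AbsolutelyContinuous.not_ae_eq_zero_of_norm_ae_eq_const
    {X E : Type*} [MeasurableSpace X] [NormedAddCommGroup E] {μ ν : Measure X} [NeZero ν]
    (hνμ : ν ≪ μ) {g : X → E} {r : ℝ} (hr : ∀ᵐ x ∂μ, ‖g x‖ = r) (hg : ¬ g =ᵐ[μ] 0) :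
    ¬ g =ᵐ[ν] 0 := by
  have hr0 : r ≠ 0 := by
    rintro rfl
    exact hg (by filter_upwards [hr] with x hx using norm_eq_zero.1 hx)
  intro hgν
  have hrν : ∀ᵐ x ∂ν, ‖g x‖ = r := hνμ.ae_le hr
  obtain ⟨x, hx, hgx⟩ := (hrν.and hgν).exists
  exact hr0 (by simpa [hgx] using hx.symm)

theorem stmt0_general {X : Type*} [MeasurableSpace X] (μ : Measure X) [IsProbabilityMeasure μ]
    (T : X → X) (hErg : Ergodic T μ)
    (Y : Set X) (hYpos : 0 < μ Y)
    (τ : X → ℕ)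
    (μY : Measure X) (hμY : μY = (μ Y)⁻¹ • μ.restrict Y)
    (haper : ∀ (f : X → ℂ) (t : ℝ), 0 ≤ t → t < 2 * Real.pi →
      MemLp f 2 μY → ¬ f =ᵐ[μY] 0 →
      (∀ᵐ y ∂μY, f (T^[τ y] y) = Complex.exp ((t : ℂ) * (τ y : ℂ) * Complex.I) * f y) →
      t = 0 ∧ ∃ c : ℂ, f =ᵐ[μY] fun _ => c) :
    ∀ (g : X → ℂ) (t : ℝ), 0 ≤ t → t < 2 * Real.pi →
      MemLp g 2 μ → ¬ g =ᵐ[μ] 0 →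
      (∀ᵐ x ∂μ, g (T x) = Complex.exp ((t : ℂ) * Complex.I) * g x) →
      t = 0 ∧ ∃ c : ℂ, g =ᵐ[μ] fun _ => c := by
  intro g t ht0 ht2 hg hg0 heig
  have : IsProbabilityMeasure μY := hμY ▸ ProbabilityTheory.cond_isProbabilityMeasure hYpos.ne'
  have hμYμ : μY ≪ μ := hμY ▸ ProbabilityTheory.cond_absolutelyContinuous
  obtain ⟨r, hr⟩ := hErg.quasiErgodic.exists_norm_ae_eq_const_of_eigen
    (Complex.norm_exp_ofReal_mul_I t) hg.aestronglyMeasurable heig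
  have heigY : ∀ᵐ y ∂μY, g (T^[τ y] y) = Complex.exp (t * τ y * Complex.I) * g y := by
    filter_upwards [hμYμ.ae_le (ae_forall_iterate_eq_pow_mul hErg.quasiMeasurePreserving heig)]
      with y hy
    rw [hy, ← Complex.exp_nat_mul]
    ring_nf
  have hgY : MemLp g 2 μY :=
    hμY ▸ (hg.restrict Y).smul_measure (ENNReal.inv_ne_top.2 hYpos.ne')
  have hgY0 : ¬ g =ᵐ[μY] 0 := hμYμ.not_ae_eq_zero_of_norm_ae_eq_const hr hg0
  obtain ⟨rfl, -⟩ := haper g t ht0 ht2 hgY hgY0 heigY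
  have hinv : g ∘ T =ᵐ[μ] g := by simpa [EventuallyEq] using heig
  exact ⟨rfl, hErg.ae_eq_const_of_ae_eq_comp_ae hg.aestronglyMeasurable hinv⟩

/-- Aperiodicity of the first return time implies weak mixing. -/
theorem stmt0 {X : Type*} [MeasurableSpace X] (μ : Measure X) [IsProbabilityMeasure μ]
    (T : X → X) (hT : MeasurePreserving T μ μ) (hErg : Ergodic T μ)
    (Y : Set X) (hY : MeasurableSet Y) (hYpos : 0 < μ Y)
    (τ : X → ℕ) (hτ : ∀ y ∈ Y, τ y = sInf {n : ℕ | 1 ≤ n ∧ T^[n] y ∈ Y})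
    (μY : Measure X) (hμY : μY = (μ Y)⁻¹ • μ.restrict Y)
    (haper : ∀ (f : X → ℂ) (t : ℝ), 0 ≤ t → t < 2 * Real.pi →
      MemLp f 2 μY → ¬ f =ᵐ[μY] 0 →
      (∀ᵐ y ∂μY, f (T^[τ y] y) = Complex.exp ((t : ℂ) * (τ y : ℂ) * Complex.I) * f y) →
      t = 0 ∧ ∃ c : ℂ, f =ᵐ[μY] fun _ => c) :
    ∀ (g : X → ℂ) (t : ℝ), 0 ≤ t → t < 2 * Real.pi →
      MemLp g 2 μ → ¬ g =ᵐ[μ] 0 →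
      (∀ᵐ x ∂μ, g (T x) = Complex.exp ((t : ℂ) * Complex.I) * g x) →
      t = 0 ∧ ∃ c : ℂ, g =ᵐ[μ] fun _ => c :=
  stmt0_general μ T hErg Y hYpos τ μY hμY haper
end

section
/- Let (X,T,μ) be an ergodic weakly mixing measure-preserving system on a probability space, Y ⊆ X of positive measure, τ the first return time to Y and T̂ = T^τ the induced map on Y with invariant measure μ_Y. If f ∈ L²(μ_Y) is non-zero and satisfies f∘T̂ = e^{itτ} f for some t ∈ [0,2π), then t = 0 and f is constant. -/
/-!
Spread the eigenfunction over the Kakutani tower: a point `x` that first enters `Y` after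
`h(x) = hitTime T Y x` steps gets the value `e^{-i t h(x)} f(T^{h(x)} x)`. This lift `g` satisfies
`g ∘ T = e^{it} g` almost everywhere, and weak mixing of `T` then forces `t = 0` and `g`
constant; on `Y` the lift is `f` itself. The lift need not be square integrable
(`‖g‖₂² = ∫_Y τ |f|²`), so `f` is first truncated to `f · 1_{|f| ≤ M}`: since `|f|` is invariant
under the induced map, the truncation is still an eigenfunction, and it is a nonzero constant
only if `|f| ≤ M` almost everywhere on `Y`.
-/

open MeasureTheory Filter
open scoped ENNReal

-- Both take the junk value `sInf ∅ = 0` when the orbit of `x` misses `Y`.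
noncomputable def hitTime {X : Type*} (T : X → X) (Y : Set X) (x : X) : ℕ :=
  sInf {n | T^[n] x ∈ Y}

noncomputable def returnTime {X : Type*} (T : X → X) (Y : Set X) (x : X) : ℕ :=
  sInf {n | 1 ≤ n ∧ T^[n] x ∈ Y}

section HitTime

variable {X : Type*} {T : X → X} {Y : Set X} {x : X}

lemma hitTime_eq_zero_of_mem (hx : x ∈ Y) : hitTime T Y x = 0 :=
  Nat.sInf_eq_zero.mpr (Or.inl hx)

lemma iterate_hitTime_mem (hx : ∃ n, T^[n] x ∈ Y) : T^[hitTime T Y x] x ∈ Y :=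
  Nat.sInf_mem hx

lemma hitTime_eq_returnTime_of_notMem (hx : x ∉ Y) : hitTime T Y x = returnTime T Y x := by
  unfold hitTime returnTime
  congr 1
  ext (_ | n) <;> simp [hx]

lemma returnTime_eq_hitTime_add_one (hTx : ∃ n, T^[n] (T x) ∈ Y) :
    returnTime T Y x = hitTime T Y (T x) + 1 := by
  obtain ⟨n, hn⟩ := hTx
  have hpos : 1 ≤ sInf {n | 1 ≤ n ∧ T^[n] x ∈ Y} :=
    le_csInf ⟨n + 1, by simpa using hn⟩ fun _ hm => hm.1
  rw [returnTime, ← Nat.sInf_add hpos]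
  simp [hitTime]

lemma hitTime_eq_hitTime_add_one_of_notMem (hx : x ∉ Y) (hTx : ∃ n, T^[n] (T x) ∈ Y) :
    hitTime T Y x = hitTime T Y (T x) + 1 := by
  rw [hitTime_eq_returnTime_of_notMem hx, returnTime_eq_hitTime_add_one hTx]

end HitTime

lemma measurable_sInf_setOf {α : Type*} [MeasurableSpace α] {p : α → ℕ → Prop}
    (hp : ∀ n, MeasurableSet {x | p x n}) : Measurable fun x => sInf {n | p x n} := by
  classical
  -- The alternative `∀ m, ¬ p x m` leaves the infimum unchanged (`sInf ∅ = 0 = sInf univ`) and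
  -- makes the predicate satisfiable, as `Nat.find` requires.
  let q : α → ℕ → Prop := fun x n => p x n ∨ ∀ m, ¬ p x m
  have hq : ∀ x, ∃ n, q x n := fun x => by
    by_cases h : ∃ n, p x n
    · exact h.imp fun _ => Or.inl
    · exact ⟨0, Or.inr (not_exists.mp h)⟩
  have heq : (fun x => sInf {n | p x n}) = fun x => Nat.find (hq x) := by
    funext x
    have hpq : sInf {n | p x n} = sInf {n | q x n} := by
      by_cases h : ∃ n, p x n
      · simp [q, not_forall_not.mpr h]
      · simp [q, not_exists.mp h]
    rw [hpq]
    exact (Nat.sInf_def (hq x)).trans (Nat.find_congr' Iff.rfl)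
  rw [heq]
  refine measurable_find hq fun n => ?_
  simp only [q, Set.ofPred_or, Set.ofPred_forall]
  exact (hp n).union (MeasurableSet.iInter fun m => (hp m).compl)

section Dynamics

variable {X : Type*} [MeasurableSpace X] {μ : Measure X} {T : X → X} {Y : Set X}

lemma measurable_hitTime (hT : Measurable T) (hY : MeasurableSet Y) :
    Measurable (hitTime T Y) :=
  measurable_sInf_setOf fun n => (hT.iterate n) hY

lemma measurable_iterate_apply (hT : Measurable T) {k : X → ℕ} (hk : Measurable k) :
    Measurable fun x => T^[k x] x :=
  (measurable_from_prod_countable_left (f := fun p : X × ℕ => T^[p.2] p.1)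
    fun n => hT.iterate n).comp (measurable_id.prodMk hk)

lemma MeasureTheory.Measure.QuasiMeasurePreserving.iterate_apply
    (hT : Measure.QuasiMeasurePreserving T μ μ) {k : X → ℕ} (hk : Measurable k) :
    Measure.QuasiMeasurePreserving (fun x => T^[k x] x) μ μ := by
  refine ⟨measurable_iterate_apply hT.measurable hk, Measure.AbsolutelyContinuous.mk
    fun s hs hs0 => ?_⟩
  rw [Measure.map_apply (measurable_iterate_apply hT.measurable hk) hs]
  exact measure_mono_null (fun x hx => Set.mem_iUnion.mpr ⟨k x, hx⟩)
    (measure_iUnion_null fun n => (hT.iterate n).preimage_null hs0)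

lemma MeasureTheory.Measure.QuasiMeasurePreserving.restrict_of_ae_mem
    {Z : Type*} [MeasurableSpace Z] {ν : Measure Z} {Φ : Z → X}
    (hΦ : Measure.QuasiMeasurePreserving Φ ν μ)
    (hY : MeasurableSet Y) (hΦY : ∀ᵐ z ∂ν, Φ z ∈ Y) :
    Measure.QuasiMeasurePreserving Φ ν (μ.restrict Y) := by
  refine ⟨hΦ.measurable, ?_⟩
  rw [← Measure.restrict_eq_self_of_ae_mem ((ae_map_iff hΦ.aemeasurable hY).mpr hΦY)]
  exact hΦ.absolutelyContinuous.restrict Y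

lemma Ergodic.ae_exists_iterate_mem [IsFiniteMeasure μ] (hT : Ergodic T μ)
    (hY : MeasurableSet Y) (hY0 : μ Y ≠ 0) : ∀ᵐ x ∂μ, ∃ n, T^[n] x ∈ Y := by
  set W := ⋃ n, T^[n] ⁻¹' Y
  have hW : MeasurableSet W := .iUnion fun n => (hT.measurable.iterate n) hY
  have hTW : T ⁻¹' W ⊆ W := fun x hx => by
    obtain ⟨n, hn⟩ := Set.mem_iUnion.mp hx
    exact Set.mem_iUnion.mpr ⟨n + 1, by simpa [Function.iterate_succ_apply] using hn⟩
  rcases hT.ae_empty_or_univ_of_preimage_ae_le hW.nullMeasurableSet hTW.eventuallyLE with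
    hW0 | hW1
  · exact absurd (measure_mono_null (Set.subset_iUnion (fun n => T^[n] ⁻¹' Y) 0)
      (ae_eq_empty.mp hW0)) hY0
  · have hWae : ∀ᵐ x ∂μ, x ∈ W := mem_ae_iff.mpr (ae_eq_univ.mp hW1)
    exact hWae.mono fun x hx => Set.mem_iUnion.mp hx

end Dynamics

section Truncate

variable {E : Type*} [NormedAddCommGroup E]

noncomputable def truncate (M : ℝ) (z : E) : E := if ‖z‖ ≤ M then z else 0

lemma norm_truncate_le {M : ℝ} (hM : 0 ≤ M) (z : E) : ‖truncate M z‖ ≤ M := by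
  unfold truncate
  split_ifs with h
  · exact h
  · simpa using hM

lemma truncate_eq_self_of_ne_zero {M : ℝ} {z : E} (h : truncate M z ≠ 0) :
    truncate M z = z := by
  unfold truncate at *
  split_ifs at * <;> simp_all

lemma truncate_smul {𝕜 : Type*} [NormedField 𝕜] [NormedSpace 𝕜 E] {u : 𝕜} (hu : ‖u‖ = 1)
    (M : ℝ) (z : E) : truncate M (u • z) = u • truncate M z := by
  simp only [truncate, norm_smul, hu, one_mul]
  split_ifs <;> simp

lemma measurable_truncate [MeasurableSpace E] [OpensMeasurableSpace E] (M : ℝ) :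
    Measurable (truncate M : E → E) :=
  Measurable.ite (measurableSet_le measurable_norm measurable_const) measurable_id
    measurable_const

lemma exists_truncate_not_eventuallyEq_zero {α : Type*} {l : Filter α} [CountableInterFilter l]
    {f : α → E} (hf : ¬ f =ᶠ[l] 0) : ∃ M : ℕ, ¬ (fun x => truncate M (f x)) =ᶠ[l] 0 := by
  by_contra! h
  refine hf ((eventually_countable_forall.mpr h).mono fun x hx => ?_)
  obtain ⟨M, hM⟩ := exists_nat_ge ‖f x‖
  simpa [truncate, hM] using hx M

end Truncate

noncomputable def towerLift {X : Type*} (T : X → X) (Y : Set X) (t : ℝ) (f : X → ℂ) (x : X) :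
    ℂ :=
  Complex.exp ((-t * hitTime T Y x : ℝ) * Complex.I) * f (T^[hitTime T Y x] x)

section TowerLift

variable {X : Type*} {T : X → X} {Y : Set X} {t : ℝ} {f : X → ℂ} {x : X}

lemma towerLift_of_mem (hx : x ∈ Y) : towerLift T Y t f x = f x := by
  simp [towerLift, hitTime_eq_zero_of_mem hx]

lemma norm_towerLift : ‖towerLift T Y t f x‖ = ‖f (T^[hitTime T Y x] x)‖ := by
  simp only [towerLift, norm_mul, Complex.norm_exp_ofReal_mul_I, one_mul]

lemma towerLift_apply_of_notMem (hx : x ∉ Y) (hTx : ∃ n, T^[n] (T x) ∈ Y) :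
    towerLift T Y t f (T x) = Complex.exp (t * Complex.I) * towerLift T Y t f x := by
  rw [towerLift, towerLift, hitTime_eq_hitTime_add_one_of_notMem hx hTx,
    Function.iterate_succ_apply, ← mul_assoc, ← Complex.exp_add]
  congr 2
  push_cast
  ring

lemma towerLift_apply_of_mem (hx : x ∈ Y) (hTx : ∃ n, T^[n] (T x) ∈ Y)
    (heig : f (T^[returnTime T Y x] x) = Complex.exp (t * returnTime T Y x * Complex.I) * f x) :
    towerLift T Y t f (T x) = Complex.exp (t * Complex.I) * towerLift T Y t f x := by
  rw [returnTime_eq_hitTime_add_one hTx, Function.iterate_succ_apply] at heig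
  rw [towerLift, heig, towerLift_of_mem hx, ← mul_assoc, ← Complex.exp_add]
  congr 2
  push_cast
  ring

variable [MeasurableSpace X] {μ : Measure X}

lemma memLp_towerLift [IsFiniteMeasure μ] (hT : Measure.QuasiMeasurePreserving T μ μ)
    (hY : MeasurableSet Y) (hhit : ∀ᵐ x ∂μ, ∃ n, T^[n] x ∈ Y)
    (hf : AEStronglyMeasurable f (μ.restrict Y)) {C : ℝ} (hfC : ∀ x, ‖f x‖ ≤ C)
    (p : ℝ≥0∞) : MemLp (towerLift T Y t f) p μ := by
  have hk := measurable_hitTime hT.measurable hY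
  have hentry : Measure.QuasiMeasurePreserving (fun x => T^[hitTime T Y x] x) μ (μ.restrict Y) :=
    (hT.iterate_apply hk).restrict_of_ae_mem hY (hhit.mono fun _ => iterate_hitTime_mem)
  have hphase : Measurable fun x => Complex.exp ((-t * hitTime T Y x : ℝ) * Complex.I) := by
    fun_prop
  refine MemLp.of_bound (hphase.aestronglyMeasurable.mul
    (hf.comp_quasiMeasurePreserving hentry)) C (ae_of_all _ fun x => ?_)
  rw [norm_towerLift]
  exact hfC _

lemma ae_towerLift_apply (hT : Measure.QuasiMeasurePreserving T μ μ) (hY : MeasurableSet Y)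
    (hhit : ∀ᵐ x ∂μ, ∃ n, T^[n] x ∈ Y) {τ : X → ℕ}
    (hτ : ∀ y ∈ Y, τ y = returnTime T Y y)
    (heig : ∀ᵐ y ∂μ.restrict Y, f (T^[τ y] y) = Complex.exp (t * τ y * Complex.I) * f y) :
    ∀ᵐ x ∂μ, towerLift T Y t f (T x) = Complex.exp (t * Complex.I) * towerLift T Y t f x := by
  filter_upwards [hT.ae hhit, (ae_restrict_iff' hY).mp heig] with x hTx hx
  by_cases hxY : x ∈ Y
  · exact towerLift_apply_of_mem hxY hTx (hτ x hxY ▸ hx hxY)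
  · exact towerLift_apply_of_notMem hxY hTx

end TowerLift

theorem stmt1_general {X : Type*} [MeasurableSpace X] (μ : Measure X) [IsProbabilityMeasure μ]
    (T : X → X) (hErg : Ergodic T μ)
    (hwm : ∀ (g : X → ℂ) (t : ℝ), 0 ≤ t → t < 2 * Real.pi →
      MemLp g 2 μ → ¬ g =ᵐ[μ] 0 →
      (∀ᵐ x ∂μ, g (T x) = Complex.exp ((t : ℂ) * Complex.I) * g x) →
      t = 0 ∧ ∃ c : ℂ, g =ᵐ[μ] fun _ => c)
    (Y : Set X) (hY : MeasurableSet Y) (hYpos : 0 < μ Y)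
    (τ : X → ℕ) (hτ : ∀ y ∈ Y, τ y = sInf {n : ℕ | 1 ≤ n ∧ T^[n] y ∈ Y})
    (μY : Measure X) (hμY : μY = (μ Y)⁻¹ • μ.restrict Y) :
    ∀ (f : X → ℂ) (t : ℝ), 0 ≤ t → t < 2 * Real.pi →
      MemLp f 2 μY → ¬ f =ᵐ[μY] 0 →
      (∀ᵐ y ∂μY, f (T^[τ y] y) = Complex.exp ((t : ℂ) * (τ y : ℂ) * Complex.I) * f y) →
      t = 0 ∧ ∃ c : ℂ, f =ᵐ[μY] fun _ => c := by
  intro f t ht0 ht2 hf hfne hfeig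
  have hae : ae μY = ae (μ.restrict Y) := by
    rw [hμY]
    exact Measure.ae_ennreal_smul_measure_eq (ENNReal.inv_ne_zero.mpr (measure_ne_top μ Y)) _
  rw [hae] at hfne hfeig ⊢
  have hfm : AEStronglyMeasurable f (μ.restrict Y) :=
    hf.1.mono_ac (Measure.ae_le_iff_absolutelyContinuous.mp hae.ge)
  obtain ⟨M, hM⟩ := exists_truncate_not_eventuallyEq_zero hfne
  set f' := fun x => truncate M (f x)
  have hf'eig : ∀ᵐ y ∂μ.restrict Y,
      f' (T^[τ y] y) = Complex.exp (t * τ y * Complex.I) * f' y := hfeig.mono fun y hy => by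
    rw [← Complex.ofReal_natCast, ← Complex.ofReal_mul] at hy ⊢
    exact (congrArg (truncate M) hy).trans (truncate_smul (Complex.norm_exp_ofReal_mul_I _) _ _)
  have hhit := hErg.ae_exists_iterate_mem hY hYpos.ne'
  have hQ := hErg.quasiMeasurePreserving
  set g := towerLift T Y t f'
  have hgY : g =ᵐ[μ.restrict Y] f' := ae_restrict_of_forall_mem hY fun _ => towerLift_of_mem
  have hgL2 : MemLp g 2 μ := memLp_towerLift hQ hY hhit
    ((measurable_truncate _).comp_aemeasurable hfm.aemeasurable).aestronglyMeasurable
    (fun _ => norm_truncate_le (Nat.cast_nonneg M) _) 2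
  obtain ⟨rfl, c, hgc⟩ := hwm g t ht0 ht2 hgL2
    (fun hg0 => hM (hgY.symm.trans (ae_restrict_of_ae hg0)))
    (ae_towerLift_apply hQ hY hhit hτ hf'eig)
  have hf'c : f' =ᵐ[μ.restrict Y] fun _ => c := hgY.symm.trans (ae_restrict_of_ae hgc)
  have hc0 : c ≠ 0 := by
    rintro rfl
    exact hM hf'c
  refine ⟨rfl, c, hf'c.mono fun y hy => ?_⟩
  rw [← hy]
  exact (truncate_eq_self_of_ne_zero (hy ▸ hc0 : f' y ≠ 0)).symm

/-- Weak mixing implies aperiodicity of the first return time. -/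
theorem stmt1 {X : Type*} [MeasurableSpace X] (μ : Measure X) [IsProbabilityMeasure μ]
    (T : X → X) (hT : MeasurePreserving T μ μ) (hErg : Ergodic T μ)
    (hwm : ∀ (g : X → ℂ) (t : ℝ), 0 ≤ t → t < 2 * Real.pi →
      MemLp g 2 μ → ¬ g =ᵐ[μ] 0 →
      (∀ᵐ x ∂μ, g (T x) = Complex.exp ((t : ℂ) * Complex.I) * g x) →
      t = 0 ∧ ∃ c : ℂ, g =ᵐ[μ] fun _ => c)
    (Y : Set X) (hY : MeasurableSet Y) (hYpos : 0 < μ Y)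
    (τ : X → ℕ) (hτ : ∀ y ∈ Y, τ y = sInf {n : ℕ | 1 ≤ n ∧ T^[n] y ∈ Y})
    (μY : Measure X) (hμY : μY = (μ Y)⁻¹ • μ.restrict Y) :
    ∀ (f : X → ℂ) (t : ℝ), 0 ≤ t → t < 2 * Real.pi →
      MemLp f 2 μY → ¬ f =ᵐ[μY] 0 →
      (∀ᵐ y ∂μY, f (T^[τ y] y) = Complex.exp ((t : ℂ) * (τ y : ℂ) * Complex.I) * f y) →
      t = 0 ∧ ∃ c : ℂ, f =ᵐ[μY] fun _ => c :=
  stmt1_general μ T hErg hwm Y hY hYpos τ hτ μY hμY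
end

section
/- Suppose (X,T,μ) is a probability-measure-preserving system, (A_n) a sequence of measurable sets with ∑ μ(A_n) = ∞, and assume there are constants C > 0, 0 < θ < 1 with |μ(T^{-(j-i)}A_j ∩ A_i) − μ(A_j)μ(A_i)| ≤ C θ^{j−i} μ(A_i) for all i < j. Then for μ-a.e. x, setting E_n = ∑_{j=1}^n μ(A_j), we have (1/E_n) #{1 ≤ j ≤ n : T^j x ∈ A_j} → 1; in particular T^j x ∈ A_j for infinitely many j, μ-a.e. -/
open MeasureTheory ProbabilityTheory Filter Finset
open scoped Topology Classical

/-!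
Write `S_n(x) = #{1 ≤ j ≤ n : T^j x ∈ A_j}` as a sum of the indicators of `T^{-j} A_j`; its mean is
`E_n`. By invariance of `μ`, the covariance of the `i`-th and `j`-th indicators (`i ≤ j`) is the
correlation in the hypothesis, so it is at most `max 1 C * θ^(j-i) * μ(A_i)`, the `1` covering the
diagonal variances; summing the geometric series gives `Var S_n ≤ K E_n`. Along indices `n_k` with
`E_{n_k} ≈ k²` this yields `∑_k Var(S_{n_k} / E_{n_k}) ≤ ∑_k K / k² < ∞`, so the series
`∑_k (S_{n_k} / E_{n_k} - 1)²` has finite integral and `S_{n_k} / E_{n_k} → 1` almost surely.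
Since `S_n` and `E_n` are nondecreasing and `E_{n_{k+1}} / E_{n_k} → 1`, the convergence extends to
all `n`, and `S_n → ∞` because `E_n → ∞`.
-/

theorem StrictMono.exists_tendsto_atTop_bracket {φ : ℕ → ℕ} (hφ : StrictMono φ) :
    ∃ κ : ℕ → ℕ, Tendsto κ atTop atTop ∧ ∀ n, φ 0 ≤ n → φ (κ n) ≤ n ∧ n < φ (κ n + 1) := by
  refine ⟨fun n => Nat.findGreatest (fun k => φ k ≤ n) n, ?_, fun n hn => ⟨?_, ?_⟩⟩
  · refine Filter.tendsto_atTop.2 fun K => ?_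
    filter_upwards [eventually_ge_atTop (φ K)] with n hn
    exact Nat.le_findGreatest (hφ.le_apply.trans hn) hn
  · exact Nat.findGreatest_spec (P := fun k => φ k ≤ n) (Nat.zero_le n) hn
  · by_contra! h
    have := Nat.le_findGreatest (P := fun k => φ k ≤ n) (hφ.le_apply.trans h) h
    omega

theorem tendsto_div_of_tendsto_div_comp {S E : ℕ → ℝ} {φ : ℕ → ℕ} (hS0 : ∀ n, 0 ≤ S n)
    (hS : Monotone S) (hE : Monotone E) (hEtop : Tendsto E atTop atTop) (hφ : StrictMono φ)
    (hratio : Tendsto (fun k => E (φ (k + 1)) / E (φ k)) atTop (𝓝 1))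
    (hsub : Tendsto (fun k => S (φ k) / E (φ k)) atTop (𝓝 1)) :
    Tendsto (fun n => S n / E n) atTop (𝓝 1) := by
  obtain ⟨κ, hκ, hbracket⟩ := hφ.exists_tendsto_atTop_bracket
  have hpos : ∀ᶠ k in atTop, 0 < E (φ k) :=
    hφ.tendsto_atTop.eventually (hEtop.eventually_gt_atTop 0)
  have hlower : Tendsto (fun k => S (φ k) / E (φ (k + 1))) atTop (𝓝 1) := by
    have h := hsub.div hratio one_ne_zero
    rw [div_one] at h
    refine Tendsto.congr' ?_ h
    filter_upwards [hpos] with k hk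
    simp only [Pi.div_apply]
    field_simp
  have hupper : Tendsto (fun k => S (φ (k + 1)) / E (φ k)) atTop (𝓝 1) := by
    have h := (hsub.comp (tendsto_add_atTop_nat 1)).mul hratio
    rw [one_mul] at h
    refine Tendsto.congr' ?_ h
    filter_upwards [hpos, (tendsto_add_atTop_nat 1).eventually hpos] with k hk hk'
    simp only [Function.comp_apply]
    field_simp
  refine tendsto_of_tendsto_of_tendsto_of_le_of_le' (hlower.comp hκ) (hupper.comp hκ) ?_ ?_ <;>
    filter_upwards [eventually_ge_atTop (φ 0), hκ.eventually hpos] with n hn hk <;>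
    obtain ⟨hlo, hhi⟩ := hbracket n hn
  · exact div_le_div₀ (hS0 n) (hS hlo) (hk.trans_le (hE hlo)) (hE hhi.le)
  · exact div_le_div₀ (hS0 _) (hS hhi.le) hk (hE hlo)

theorem exists_strictMono_sq_le_lt_sq_add_one {E : ℕ → ℝ} (hE : Monotone E) (h0 : E 0 = 0)
    (hstep : ∀ n, E (n + 1) ≤ E n + 1) (htop : Tendsto E atTop atTop) :
    ∃ φ : ℕ → ℕ, StrictMono φ ∧ ∀ k : ℕ, (k : ℝ) ^ 2 ≤ E (φ k) ∧ E (φ k) < (k : ℝ) ^ 2 + 1 := by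
  -- `φ k` is the first time `E` reaches `k²`; unit steps keep `E (φ k) < k² + 1 ≤ (k + 1)²`.
  have hex : ∀ k : ℕ, ∃ n, (k : ℝ) ^ 2 ≤ E n := fun k => (htop.eventually_ge_atTop _).exists
  have hbound : ∀ k : ℕ, (k : ℝ) ^ 2 ≤ E (Nat.find (hex k)) ∧
      E (Nat.find (hex k)) < (k : ℝ) ^ 2 + 1 := by
    intro k
    refine ⟨Nat.find_spec (hex k), ?_⟩
    rcases h : Nat.find (hex k) with _ | m
    · rw [h0]; positivity
    · have hm := Nat.find_min (hex k) (by omega : m < Nat.find (hex k))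
      linarith [hstep m, not_le.1 hm]
  refine ⟨fun k => Nat.find (hex k), strictMono_nat_of_lt_succ fun k => ?_, hbound⟩
  refine (Nat.lt_find_iff _ _).2 fun m hm => not_le.2 ?_
  have := (hE hm).trans_lt (hbound k).2
  push_cast
  nlinarith [(k.cast_nonneg : (0 : ℝ) ≤ k)]

theorem tendsto_div_of_sq_le_lt_sq_add_one {a : ℕ → ℝ}
    (ha : ∀ k : ℕ, (k : ℝ) ^ 2 ≤ a k ∧ a k < (k : ℝ) ^ 2 + 1) :
    Tendsto (fun k => a (k + 1) / a k) atTop (𝓝 1) := by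
  have hinv := tendsto_one_div_atTop_nhds_zero_nat (𝕜 := ℝ)
  have hlim : Tendsto (fun k : ℕ => (1 + 1 / (k : ℝ)) ^ 2 + (1 / (k : ℝ)) ^ 2) atTop (𝓝 1) := by
    simpa using ((tendsto_const_nhds (x := (1 : ℝ))).add hinv |>.pow 2).add (hinv.pow 2)
  refine tendsto_of_tendsto_of_tendsto_of_le_of_le' tendsto_const_nhds hlim ?_ ?_ <;>
    filter_upwards [eventually_ge_atTop 1] with k hk <;>
    have hk : (1 : ℝ) ≤ k := by exact_mod_cast hk
  all_goals
    have hpos : 0 < a k := by nlinarith [(ha k).1]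
    have hnext := ha (k + 1)
    push_cast at hnext
  · rw [le_div_iff₀ hpos, one_mul]
    nlinarith [(ha k).2]
  · rw [div_le_iff₀ hpos]
    have hform : (1 + 1 / (k : ℝ)) ^ 2 + (1 / (k : ℝ)) ^ 2 = (((k : ℝ) + 1) ^ 2 + 1) / k ^ 2 := by
      field_simp
    rw [hform, div_mul_eq_mul_div, le_div_iff₀ (by positivity)]
    nlinarith [(ha k).1]

theorem Set.infinite_of_tendsto_card_filter_div {P : ℕ → Prop} [DecidablePred P] {E : ℕ → ℝ}
    (hE : Tendsto E atTop atTop)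
    (h : Tendsto (fun n => (#{j ∈ Finset.Icc 1 n | P j} : ℝ) / E n) atTop (𝓝 1)) :
    {j | P j}.Infinite := by
  have hcard : Tendsto (fun n => (#{j ∈ Finset.Icc 1 n | P j} : ℝ)) atTop atTop := by
    refine Tendsto.congr' ?_ (h.pos_mul_atTop one_pos hE)
    filter_upwards [hE.eventually_gt_atTop 0] with n hn
    exact div_mul_cancel₀ _ hn.ne'
  intro hfin
  obtain ⟨n, hn⟩ := (hcard.eventually_gt_atTop (#hfin.toFinset : ℝ)).exists
  have hle : #{j ∈ Finset.Icc 1 n | P j} ≤ #hfin.toFinset :=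
    Finset.card_le_card fun j hj => by simpa using (mem_filter.1 hj).2
  exact hn.not_ge (by exact_mod_cast hle)

theorem geom_sum_filter_le_of_lt_one (s : Finset ℕ) {θ : ℝ} (hθ0 : 0 ≤ θ) (hθ1 : θ < 1) (i : ℕ) :
    ∑ j ∈ s with i ≤ j, θ ^ (j - i) ≤ (1 - θ)⁻¹ := by
  have hinj : Set.InjOn (fun j => j - i) (s.filter (i ≤ ·)) := fun j hj j' hj' h => by
    simp only [coe_filter, Set.mem_ofPred_eq] at hj hj' h
    omega
  rw [← sum_image (g := fun j => j - i) (f := fun k => θ ^ k) hinj,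
    ← tsum_geometric_of_lt_one hθ0 hθ1]
  exact (summable_geometric_of_lt_one hθ0 hθ1).sum_le_tsum _ fun k _ => by positivity

theorem sum_sum_le_of_le_geometric (s : Finset ℕ) {c : ℕ → ℕ → ℝ} {p : ℕ → ℝ} {D θ : ℝ}
    (hp : ∀ i, 0 ≤ p i) (hD : 0 ≤ D) (hθ0 : 0 ≤ θ) (hθ1 : θ < 1)
    (hc : ∀ i j, i ≤ j → c i j ≤ D * θ ^ (j - i) * p i ∧ c j i ≤ D * θ ^ (j - i) * p i) :
    ∑ i ∈ s, ∑ j ∈ s, c i j ≤ 2 * D / (1 - θ) * ∑ i ∈ s, p i := by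
  set e : ℕ → ℕ → ℝ := fun i j => if i ≤ j then D * θ ^ (j - i) * p i else 0 with he
  have he0 : ∀ i j, 0 ≤ e i j := fun i j => by
    simp only [he]; split_ifs <;> positivity [hp i]
  have hce : ∀ i j, c i j ≤ e i j + e j i := fun i j => by
    rcases le_total i j with h | h
    · simpa [he, h] using (hc i j h).1.trans (le_add_of_nonneg_right (he0 j i))
    · simpa [he, h] using (hc j i h).2.trans (le_add_of_nonneg_left (he0 i j))
  have hrow : ∀ i, ∑ j ∈ s, e i j ≤ D / (1 - θ) * p i := fun i => by
    calc ∑ j ∈ s, e i j = D * p i * ∑ j ∈ s with i ≤ j, θ ^ (j - i) := by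
          rw [he, ← sum_filter, mul_sum]; exact sum_congr rfl fun j _ => by ring
      _ ≤ D * p i * (1 - θ)⁻¹ := by
          gcongr
          · positivity [hp i]
          · exact geom_sum_filter_le_of_lt_one s hθ0 hθ1 i
      _ = D / (1 - θ) * p i := by ring
  calc ∑ i ∈ s, ∑ j ∈ s, c i j ≤ ∑ i ∈ s, ∑ j ∈ s, (e i j + e j i) :=
        sum_le_sum fun i _ => sum_le_sum fun j _ => hce i j
    _ = 2 * ∑ i ∈ s, ∑ j ∈ s, e i j := by
        simp only [sum_add_distrib]; rw [sum_comm (f := fun j i => e i j)]; ring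
    _ ≤ 2 * ∑ i ∈ s, D / (1 - θ) * p i := by gcongr with i; exact hrow i
    _ = 2 * D / (1 - θ) * ∑ i ∈ s, p i := by rw [← mul_sum]; ring

section SecondMoment

variable {Ω : Type*} [MeasurableSpace Ω] {μ : Measure Ω} [IsFiniteMeasure μ]

theorem ae_tendsto_sub_integral_of_summable_variance {Z : ℕ → Ω → ℝ} (hZ : ∀ k, MemLp (Z k) 2 μ)
    (hsum : Summable fun k => Var[Z k; μ]) :
    ∀ᵐ ω ∂μ, Tendsto (fun k => Z k ω - μ[Z k]) atTop (𝓝 0) := by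
  have hmeas : ∀ k, AEMeasurable (fun ω => ENNReal.ofReal ((Z k ω - μ[Z k]) ^ 2)) μ := fun k =>
    (((hZ k).aestronglyMeasurable.aemeasurable.sub_const _).pow_const 2).ennreal_ofReal
  have hfin : ∫⁻ ω, ∑' k, ENNReal.ofReal ((Z k ω - μ[Z k]) ^ 2) ∂μ ≠ ⊤ := by
    simp_rw [lintegral_tsum hmeas, ← evariance_eq_lintegral_ofReal, ← ofReal_variance (hZ _),
      ← ENNReal.ofReal_tsum_of_nonneg (fun k => variance_nonneg _ _) hsum]
    exact ENNReal.ofReal_ne_top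
  filter_upwards [ae_lt_top' (AEMeasurable.tsum hmeas) hfin] with ω hω
  have hsq : Summable fun k => (Z k ω - μ[Z k]) ^ 2 :=
    (ENNReal.summable_toReal hω.ne).congr fun k => ENNReal.toReal_ofReal (sq_nonneg _)
  refine (tendsto_zero_iff_abs_tendsto_zero _).2 ?_
  simpa [Function.comp_def, Real.sqrt_sq_eq_abs] using hsq.tendsto_atTop_zero.sqrt

theorem ae_tendsto_div_integral_of_variance_le {S : ℕ → Ω → ℝ} {K : ℝ}
    (hS : ∀ k, MemLp (S k) 2 μ) (hK : 0 ≤ K) (hvar : ∀ k, Var[S k; μ] ≤ K * μ[S k])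
    (hsq : ∀ k : ℕ, (k : ℝ) ^ 2 ≤ μ[S k]) :
    ∀ᵐ ω ∂μ, Tendsto (fun k => S k ω / μ[S k]) atTop (𝓝 1) := by
  set Z : ℕ → Ω → ℝ := fun k ω => S k ω / μ[S k] with hZ
  have hpos : ∀ k : ℕ, 1 ≤ k → 0 < μ[S k] := fun k hk => by
    have : (1 : ℝ) ≤ k := by exact_mod_cast hk
    nlinarith [hsq k]
  have hvarZ : ∀ k : ℕ, 1 ≤ k → Var[Z k; μ] ≤ K * (1 / (k : ℝ) ^ 2) := fun k hk => by
    have := hpos k hk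
    calc Var[Z k; μ] = Var[S k; μ] / μ[S k] ^ 2 := by
          simp only [hZ, div_eq_mul_inv, variance_mul_const, inv_pow]
      _ ≤ K * μ[S k] / μ[S k] ^ 2 := by gcongr; exact hvar k
      _ = K / μ[S k] := by field_simp
      _ ≤ K * (1 / (k : ℝ) ^ 2) := by
          rw [mul_one_div]
          exact div_le_div_of_nonneg_left hK (by positivity) (hsq k)
  have hsum : Summable fun k => Var[Z k; μ] := by
    refine .of_norm_bounded_eventually_nat
      ((Real.summable_one_div_nat_pow.2 one_lt_two).mul_left K) ?_
    filter_upwards [eventually_ge_atTop 1] with k hk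
    rw [Real.norm_of_nonneg (variance_nonneg _ _)]
    exact hvarZ k hk
  have hmemLp : ∀ k, MemLp (Z k) 2 μ := fun k => by
    simpa only [hZ, div_eq_mul_inv] using (hS k).mul_const _
  filter_upwards [ae_tendsto_sub_integral_of_summable_variance hmemLp hsum] with ω hω
  refine tendsto_sub_nhds_zero_iff.1 (Tendsto.congr' ?_ hω)
  filter_upwards [eventually_ge_atTop 1] with k hk
  rw [hZ, integral_div, div_self (hpos k hk).ne']

theorem ae_tendsto_sum_div_sum_integral {Y : ℕ → Ω → ℝ} {K : ℝ} (hY : ∀ j, MemLp (Y j) 2 μ)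
    (hY0 : ∀ j ω, 0 ≤ Y j ω) (hY1 : ∀ j, μ[Y j] ≤ 1) (hK : 0 ≤ K)
    (htop : Tendsto (fun n => ∑ j ∈ Icc 1 n, μ[Y j]) atTop atTop)
    (hvar : ∀ n, Var[fun ω => ∑ j ∈ Icc 1 n, Y j ω; μ] ≤ K * ∑ j ∈ Icc 1 n, μ[Y j]) :
    ∀ᵐ ω ∂μ, Tendsto (fun n => (∑ j ∈ Icc 1 n, Y j ω) / ∑ j ∈ Icc 1 n, μ[Y j]) atTop (𝓝 1) := by
  set E : ℕ → ℝ := fun n => ∑ j ∈ Icc 1 n, μ[Y j] with hE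
  have hEmono : Monotone E := fun a b hab =>
    sum_le_sum_of_subset_of_nonneg (Icc_subset_Icc le_rfl hab) fun j _ _ =>
      integral_nonneg (hY0 j)
  have hEstep : ∀ n, E (n + 1) ≤ E n + 1 := fun n => by
    simp only [hE, sum_Icc_succ_top (Nat.le_add_left 1 n)]
    linarith [hY1 (n + 1)]
  obtain ⟨φ, hφ, hφE⟩ := exists_strictMono_sq_le_lt_sq_add_one hEmono (by simp [hE]) hEstep htop
  have hint : ∀ n, μ[fun ω => ∑ j ∈ Icc 1 n, Y j ω] = E n := fun n =>
    integral_finsetSum _ fun j _ => (hY j).integrable one_le_two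
  have hsub := ae_tendsto_div_integral_of_variance_le
    (S := fun k ω => ∑ j ∈ Icc 1 (φ k), Y j ω) (fun k => memLp_finsetSum _ fun j _ => hY j) hK
    (fun k => by simpa only [hint] using hvar (φ k)) (fun k => by simpa only [hint] using (hφE k).1)
  filter_upwards [hsub] with ω hω
  refine tendsto_div_of_tendsto_div_comp (fun n => sum_nonneg fun j _ => hY0 j ω)
    (fun a b hab => sum_le_sum_of_subset_of_nonneg (Icc_subset_Icc le_rfl hab)
      fun j _ _ => hY0 j ω) hEmono htop hφ (tendsto_div_of_sq_le_lt_sq_add_one hφE) ?_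
  simpa only [hint] using hω

end SecondMoment

theorem covariance_indicator_one {Ω : Type*} [MeasurableSpace Ω] {μ : Measure Ω}
    [IsProbabilityMeasure μ] {s t : Set Ω} (hs : MeasurableSet s) (ht : MeasurableSet t) :
    cov[s.indicator 1, t.indicator 1; μ] = μ.real (s ∩ t) - μ.real s * μ.real t := by
  have hmemLp : ∀ {u : Set Ω}, MeasurableSet u → MemLp (u.indicator (1 : Ω → ℝ)) 2 μ :=
    fun hu => (memLp_const 1).indicator hu
  rw [covariance_eq_sub (hmemLp hs) (hmemLp ht),
    ← Set.inter_indicator_one, integral_indicator_one (hs.inter ht), integral_indicator_one hs,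
    integral_indicator_one ht]

theorem MeasureTheory.MeasurePreserving.measureReal_preimage_iterate_inter {X : Type*}
    [MeasurableSpace X] {μ : Measure X} {T : X → X} (hT : MeasurePreserving T μ μ) {s t : Set X}
    (hs : MeasurableSet s) (ht : MeasurableSet t) (i k : ℕ) :
    μ.real (T^[i] ⁻¹' s ∩ T^[i + k] ⁻¹' t) = μ.real (T^[k] ⁻¹' t ∩ s) := by
  rw [add_comm, Function.iterate_add, Set.preimage_comp, Set.inter_comm, ← Set.preimage_inter,
    (hT.iterate i).measureReal_preimage
      ((hT.iterate k).measurable ht |>.inter hs).nullMeasurableSet]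

section HitIndicator

variable {X : Type*} {T : X → X} {A : ℕ → Set X}

noncomputable def hitIndicator (T : X → X) (A : ℕ → Set X) (j : ℕ) : X → ℝ :=
  (T^[j] ⁻¹' A j).indicator 1

theorem hitIndicator_nonneg (j : ℕ) (x : X) : 0 ≤ hitIndicator T A j x :=
  Set.indicator_nonneg (fun _ _ => zero_le_one) x

theorem sum_hitIndicator_eq_card (x : X) (n : ℕ) [DecidablePred fun j => T^[j] x ∈ A j] :
    ∑ j ∈ Icc 1 n, hitIndicator T A j x = (#{j ∈ Icc 1 n | T^[j] x ∈ A j} : ℝ) := by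
  rw [card_filter, Nat.cast_sum]
  refine sum_congr rfl fun j _ => ?_
  by_cases h : T^[j] x ∈ A j <;> simp [hitIndicator, h]

variable [MeasurableSpace X]

def HasExpDecayOfCorrelations (μ : Measure X) (T : X → X) (A : ℕ → Set X) (C θ : ℝ) : Prop :=
  ∀ i j : ℕ, i < j → |μ.real (T^[j - i] ⁻¹' A j ∩ A i) - μ.real (A j) * μ.real (A i)| ≤
    C * θ ^ (j - i) * μ.real (A i)

variable {μ : Measure X}

theorem memLp_hitIndicator [IsFiniteMeasure μ] (hT : Measurable T)
    (hA : ∀ n, MeasurableSet (A n)) (j : ℕ) : MemLp (hitIndicator T A j) 2 μ :=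
  (memLp_const 1).indicator (hT.iterate j (hA j))

theorem integral_hitIndicator (hT : MeasurePreserving T μ μ) (hA : ∀ n, MeasurableSet (A n))
    (j : ℕ) : μ[hitIndicator T A j] = μ.real (A j) := by
  rw [hitIndicator, integral_indicator_one (hT.measurable.iterate j (hA j)),
    (hT.iterate j).measureReal_preimage (hA j).nullMeasurableSet]

variable [IsProbabilityMeasure μ] {C θ : ℝ}

theorem covariance_hitIndicator_le (hT : MeasurePreserving T μ μ)
    (hA : ∀ n, MeasurableSet (A n)) (hθ : 0 ≤ θ)
    (hdecay : HasExpDecayOfCorrelations μ T A C θ)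
    {i j : ℕ} (hij : i ≤ j) :
    cov[hitIndicator T A i, hitIndicator T A j; μ] ≤ max 1 C * θ ^ (j - i) * μ.real (A i) := by
  have hmeas : ∀ n, MeasurableSet (T^[n] ⁻¹' A n) := fun n => hT.measurable.iterate n (hA n)
  obtain ⟨k, rfl⟩ := Nat.exists_eq_add_of_le hij
  rw [hitIndicator, hitIndicator, covariance_indicator_one (hmeas i) (hmeas (i + k)),
    hT.measureReal_preimage_iterate_inter (hA i) (hA (i + k))]
  simp only [(hT.iterate _).measureReal_preimage (hA _).nullMeasurableSet,
    Nat.add_sub_cancel_left]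
  have hp := measureReal_nonneg (μ := μ) (s := A i)
  rcases Nat.eq_zero_or_pos k with rfl | hk
  · simp only [add_zero, pow_zero, mul_one, Function.iterate_zero, Set.preimage_id,
      Set.inter_self]
    nlinarith [mul_nonneg (sub_nonneg.2 (le_max_left 1 C)) hp]
  · have := (abs_le.1 (hdecay i (i + k) (by omega))).2
    rw [Nat.add_sub_cancel_left] at this
    nlinarith [mul_nonneg (mul_nonneg (sub_nonneg.2 (le_max_right 1 C)) (pow_nonneg hθ k)) hp]

theorem variance_sum_hitIndicator_le (hT : MeasurePreserving T μ μ)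
    (hA : ∀ n, MeasurableSet (A n)) (hθ0 : 0 ≤ θ) (hθ1 : θ < 1)
    (hdecay : HasExpDecayOfCorrelations μ T A C θ) (s : Finset ℕ) :
    Var[fun x => ∑ j ∈ s, hitIndicator T A j x; μ] ≤
      2 * max 1 C / (1 - θ) * ∑ j ∈ s, μ.real (A j) := by
  rw [variance_fun_sum' fun j _ => memLp_hitIndicator hT.measurable hA j]
  refine sum_sum_le_of_le_geometric s (fun _ => measureReal_nonneg) (by positivity) hθ0 hθ1
    fun i j hij => ⟨covariance_hitIndicator_le hT hA hθ0 hdecay hij, ?_⟩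
  rw [covariance_comm]
  exact covariance_hitIndicator_le hT hA hθ0 hdecay hij

end HitIndicator

theorem stmt7_general {X : Type*} [MeasurableSpace X] (μ : Measure X) [IsProbabilityMeasure μ]
    (T : X → X) (hT : MeasurePreserving T μ μ)
    (A : ℕ → Set X) (hA : ∀ n, MeasurableSet (A n))
    (C θ : ℝ) (hθ0 : 0 < θ) (hθ1 : θ < 1)
    (hdecay : ∀ i j : ℕ, i < j →
      |(μ (T^[j - i] ⁻¹' A j ∩ A i)).toReal - (μ (A j)).toReal * (μ (A i)).toReal| ≤
        C * θ ^ (j - i) * (μ (A i)).toReal)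
    (hE : Tendsto (fun n : ℕ => ∑ j ∈ Finset.Icc 1 n, (μ (A j)).toReal) atTop atTop) :
    ∀ᵐ x ∂μ,
      Tendsto (fun n : ℕ =>
          (((Finset.Icc 1 n).filter (fun j => T^[j] x ∈ A j)).card : ℝ) /
            (∑ j ∈ Finset.Icc 1 n, (μ (A j)).toReal)) atTop (𝓝 1) ∧
      {j : ℕ | T^[j] x ∈ A j}.Infinite := by
  have hint := integral_hitIndicator hT hA
  have hlim := ae_tendsto_sum_div_sum_integral (K := 2 * max 1 C / (1 - θ))
    (memLp_hitIndicator hT.measurable hA) hitIndicator_nonneg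
    (fun j => (hint j).trans_le measureReal_le_one)
    (div_nonneg (by positivity) (sub_nonneg.2 hθ1.le))
    (by simpa only [hint, measureReal_def] using hE)
    fun n => by simpa only [hint, measureReal_def] using
      variance_sum_hitIndicator_le hT hA hθ0.le hθ1 hdecay (Icc 1 n)
  filter_upwards [hlim] with x hx
  have hcount : Tendsto (fun n => (#{j ∈ Icc 1 n | T^[j] x ∈ A j} : ℝ) /
      ∑ j ∈ Icc 1 n, (μ (A j)).toReal) atTop (𝓝 1) := by
    simpa only [sum_hitIndicator_eq_card, hint, measureReal_def] using hx
  exact ⟨hcount, Set.infinite_of_tendsto_card_filter_div hE hcount⟩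

/-- Strong Borel–Cantelli lemma for a sequence of sets with exponentially decaying
pair correlations; in particular the Borel–Cantelli property holds. -/
theorem stmt7 {X : Type*} [MeasurableSpace X] (μ : Measure X) [IsProbabilityMeasure μ]
    (T : X → X) (hT : MeasurePreserving T μ μ)
    (A : ℕ → Set X) (hA : ∀ n, MeasurableSet (A n))
    (C θ : ℝ) (hC : 0 < C) (hθ0 : 0 < θ) (hθ1 : θ < 1)
    (hdecay : ∀ i j : ℕ, i < j →
      |(μ (T^[j - i] ⁻¹' A j ∩ A i)).toReal - (μ (A j)).toReal * (μ (A i)).toReal| ≤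
        C * θ ^ (j - i) * (μ (A i)).toReal)
    (hE : Tendsto (fun n : ℕ => ∑ j ∈ Finset.Icc 1 n, (μ (A j)).toReal) atTop atTop) :
    ∀ᵐ x ∂μ,
      Tendsto (fun n : ℕ =>
          (((Finset.Icc 1 n).filter (fun j => T^[j] x ∈ A j)).card : ℝ) /
            (∑ j ∈ Finset.Icc 1 n, (μ (A j)).toReal)) atTop (𝓝 1) ∧
      {j : ℕ | T^[j] x ∈ A j}.Infinite :=
  stmt7_general μ T hT A hA C θ hθ0 hθ1 hdecay hE
end

section
/- Regularity of flow-induced observables over balls: let B ⊆ ℝ^d be a compact set, r : B → [1, R] measurable, and for a fixed ball U = B_δ(z,u) ⊆ {(x,t) : x ∈ B, 0 ≤ t ≤ r(x)} in the Euclidean metric on ℝ^{d+1}, define ψ : B → ℝ by ψ(x) = Leb{s ∈ [0, r(x)] : (x,s) ∈ U} = length of the vertical slice of U over x. Then ψ belongs to the quasi-Hölder space V_{1/2}(B): there is K (depending on δ, d, but bounds can be made uniform over δ ≤ δ₀) such that sup_{0<ε≤ε₀} ε^{−1/2} ∫_B osc(ψ, B_ε(x)) dx ≤ K. -/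
/-!
The ball `U` lies under the roof, so over each base point `x ∈ B` its slice length is
`ψ x = 2 √(δ² - |x - z|²)` (the square root of a negative number being `0` takes care of the
points outside the shadow of `U`). Since `√` is `1/2`-Hölder on `ℝ` and `x ↦ |x - z|²` is
Lipschitz on bounded sets, `ψ` is `1/2`-Hölder on `B`. Hence the oscillation of `ψ` on every
`ε`-ball is `O(√ε)`, and integrating over the compact set `B` gives the bound.
-/

open MeasureTheory Filter Metric
open scoped ENNReal NNReal Topology

namespace Real

lemma sqrt_le_sqrt_add_sqrt_sub {x y : ℝ} (hyx : y ≤ x) : √x ≤ √y + √(x - y) := by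
  rcases lt_or_ge y 0 with hy | hy
  · rw [sqrt_eq_zero_of_nonpos hy.le, zero_add]
    exact sqrt_le_sqrt (by linarith)
  · rw [sqrt_le_left (by positivity), add_sq, sq_sqrt hy, sq_sqrt (sub_nonneg.2 hyx)]
    nlinarith [mul_nonneg (sqrt_nonneg y) (sqrt_nonneg (x - y))]

lemma abs_sqrt_sub_sqrt_le (x y : ℝ) : |√x - √y| ≤ √|x - y| := by
  wlog hyx : y ≤ x generalizing x y
  · rw [abs_sub_comm, abs_sub_comm x]
    exact this y x (le_of_not_ge hyx)
  rw [abs_of_nonneg (sub_nonneg.2 (sqrt_le_sqrt hyx)), abs_of_nonneg (sub_nonneg.2 hyx)]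
  linarith [sqrt_le_sqrt_add_sqrt_sub hyx]

lemma volume_setOf_sq_sub_lt (u c : ℝ) :
    volume {s : ℝ | (s - u) ^ 2 < c} = ENNReal.ofReal (2 * √c) := by
  have : {s : ℝ | (s - u) ^ 2 < c} = Set.Ioo (u - √c) (u + √c) := by
    ext s
    rw [Set.mem_ofPred_eq, ← sq_abs, ← lt_sqrt (abs_nonneg _), abs_sub_lt_iff, Set.mem_Ioo]
    constructor <;> intro h <;> constructor <;> linarith [h.1, h.2]
  rw [this, volume_Ioo]
  ring_nf

end Real

section Holder

variable {X Y : Type*} [PseudoMetricSpace X] [PseudoMetricSpace Y]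

lemma HolderOnWith.of_dist_le {C r : ℝ≥0} {f : X → Y} {s : Set X}
    (h : ∀ x ∈ s, ∀ y ∈ s, dist (f x) (f y) ≤ C * dist x y ^ (r : ℝ)) :
    HolderOnWith C r f s := by
  intro x hx y hy
  rw [edist_dist, edist_dist, ENNReal.ofReal_rpow_of_nonneg dist_nonneg r.coe_nonneg,
    ← ENNReal.ofReal_coe_nnreal, ← ENNReal.ofReal_mul C.coe_nonneg]
  exact ENNReal.ofReal_le_ofReal (h x hx y hy)

lemma abs_dist_sq_sub_dist_sq_le {z : X} {D : ℝ} {x y : X} (hx : x ∈ closedBall z D)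
    (hy : y ∈ closedBall z D) : |dist x z ^ 2 - dist y z ^ 2| ≤ 2 * D * dist x y := by
  rw [mem_closedBall] at hx hy
  calc |dist x z ^ 2 - dist y z ^ 2| = |dist x z - dist y z| * (dist x z + dist y z) := by
        rw [← abs_of_nonneg (by positivity : 0 ≤ dist x z + dist y z), ← abs_mul]
        ring_nf
    _ ≤ dist x y * (2 * D) := by
        gcongr
        · exact abs_dist_sub_le x y z
        · linarith
    _ = 2 * D * dist x y := by ring

lemma holderOnWith_two_mul_sqrt_sub_dist_sq (c : ℝ) (z : X) (D : ℝ≥0) :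
    HolderOnWith (2 * NNReal.sqrt (2 * D)) (1 / 2) (fun x => 2 * √(c - dist x z ^ 2))
      (closedBall z D) :=
  .of_dist_le fun x hx y hy => calc
    dist (2 * √(c - dist x z ^ 2)) (2 * √(c - dist y z ^ 2))
        = 2 * |√(c - dist x z ^ 2) - √(c - dist y z ^ 2)| := by
          rw [Real.dist_eq, ← mul_sub, abs_mul, abs_two]
    _ ≤ 2 * √|dist y z ^ 2 - dist x z ^ 2| := by
          rw [show dist y z ^ 2 - dist x z ^ 2 = c - dist x z ^ 2 - (c - dist y z ^ 2) by ring]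
          gcongr
          exact Real.abs_sqrt_sub_sqrt_le _ _
    _ ≤ 2 * √(2 * D * dist y x) := by grw [abs_dist_sq_sub_dist_sq_le hy hx]
    _ = _ := by
          push_cast
          rw [Real.sqrt_mul (by positivity), dist_comm, Real.sqrt_eq_rpow, Real.sqrt_eq_rpow]
          ring

end Holder

section Oscillation

variable {α : Type*} [MeasurableSpace α]

noncomputable def essOsc (f : α → ℝ) (μ : Measure α) : ℝ := essSup f μ - essInf f μ

@[simp]
lemma essOsc_zero_measure (f : α → ℝ) : essOsc f 0 = 0 := by
  simp [essOsc, essSup, essInf, limsup_eq, liminf_eq]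

lemma essOsc_mem_Icc_of_ae_dist_le {f : α → ℝ} {μ : Measure α} {c η : ℝ} (hη : 0 ≤ η)
    (h : ∀ᵐ y ∂μ, dist (f y) c ≤ η) : essOsc f μ ∈ Set.Icc 0 (2 * η) := by
  rcases eq_zero_or_neZero μ with rfl | hμ
  · simp [hη]
  have hIcc : ∀ᵐ y ∂μ, f y ∈ Set.Icc (c - η) (c + η) := h.mono fun y hy => by
    rw [Real.dist_eq, abs_sub_le_iff] at hy
    constructor <;> linarith
  have hbdd_le : IsBoundedUnder (· ≤ ·) (ae μ) f := ⟨c + η, hIcc.mono fun _ hy => hy.2⟩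
  have hbdd_ge : IsBoundedUnder (· ≥ ·) (ae μ) f := ⟨c - η, hIcc.mono fun _ hy => hy.1⟩
  have hsup : essSup f μ ≤ c + η :=
    essSup_le_of_ae_le _ (hIcc.mono fun _ hy => hy.2) hbdd_ge.isCoboundedUnder_flip
  have hinf : c - η ≤ essInf f μ :=
    le_essInf_of_ae_le _ (hIcc.mono fun _ hy => hy.1) hbdd_le.isCoboundedUnder_flip
  have hinf_le_sup : essInf f μ ≤ essSup f μ := liminf_le_limsup hbdd_le hbdd_ge
  exact ⟨sub_nonneg.2 hinf_le_sup, by unfold essOsc; linarith⟩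

variable {X : Type*} [PseudoMetricSpace X] [MeasurableSpace X] [OpensMeasurableSpace X]

theorem HolderOnWith.setIntegral_essOsc_le {μ : Measure X} {ψ : X → ℝ} {C r : ℝ≥0} {B : Set X}
    (hψ : HolderOnWith C r ψ B) (hB : MeasurableSet B) (hμB : μ B ≠ ∞) {ε : ℝ} (hε : 0 ≤ ε) :
    ∫ x in B, essOsc ψ (μ.restrict (ball x ε ∩ B)) ∂μ ≤ μ.real B * (2 * (C * ε ^ (r : ℝ))) := by
  have hosc : ∀ x ∈ B,
      essOsc ψ (μ.restrict (ball x ε ∩ B)) ∈ Set.Icc 0 (2 * (C * ε ^ (r : ℝ))) :=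
    fun x hx => essOsc_mem_Icc_of_ae_dist_le (by positivity) <|
      ae_restrict_of_forall_mem (measurableSet_ball.inter hB) fun y hy =>
        hψ.dist_le_of_le hy.2 hx (mem_ball.1 hy.1).le
  calc ∫ x in B, essOsc ψ (μ.restrict (ball x ε ∩ B)) ∂μ
      ≤ ∫ _ in B, 2 * (C * ε ^ (r : ℝ)) ∂μ :=
        integral_mono_of_nonneg (ae_restrict_of_forall_mem hB fun x hx => (hosc x hx).1)
          (integrableOn_const hμB) (ae_restrict_of_forall_mem hB fun x hx => (hosc x hx).2)
    _ = μ.real B * (2 * (C * ε ^ (r : ℝ))) := by rw [setIntegral_const, smul_eq_mul]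

end Oscillation

theorem stmt19_general (d : ℕ) (Bset : Set (EuclideanSpace ℝ (Fin d))) (hBcpt : IsCompact Bset)
    (r : EuclideanSpace ℝ (Fin d) → ℝ)
    (δ : ℝ) (z : EuclideanSpace ℝ (Fin d)) (u : ℝ)
    (hU : ∀ x ∈ Bset, ∀ s : ℝ, dist x z ^ 2 + (s - u) ^ 2 < δ ^ 2 → 0 ≤ s ∧ s ≤ r x)
    (ψ : EuclideanSpace ℝ (Fin d) → ℝ)
    (hψ : ∀ x, ψ x =
      (volume {s : ℝ | 0 ≤ s ∧ s ≤ r x ∧ dist x z ^ 2 + (s - u) ^ 2 < δ ^ 2}).toReal)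
    (ε₀ : ℝ) :
    ∃ K : ℝ, ∀ ε : ℝ, 0 < ε → ε ≤ ε₀ →
      ε ^ (-(1/2 : ℝ)) *
        ∫ x in Bset,
          (essSup ψ (volume.restrict (ball x ε ∩ Bset)) -
            essInf ψ (volume.restrict (ball x ε ∩ Bset))) ≤ K := by
  obtain ⟨D, hD, hBD⟩ := hBcpt.isBounded.subset_closedBall_lt 0 z
  lift D to ℝ≥0 using hD.le
  have hψ_eq : Set.EqOn ψ (fun x => 2 * √(δ ^ 2 - dist x z ^ 2)) Bset := fun x hx => by
    have hslice : {s | 0 ≤ s ∧ s ≤ r x ∧ dist x z ^ 2 + (s - u) ^ 2 < δ ^ 2}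
        = {s | (s - u) ^ 2 < δ ^ 2 - dist x z ^ 2} := by
      ext s
      simp only [Set.mem_ofPred_eq]
      refine ⟨fun h => by linarith [h.2.2], fun h => ?_⟩
      have hs : dist x z ^ 2 + (s - u) ^ 2 < δ ^ 2 := by linarith
      exact ⟨(hU x hx s hs).1, (hU x hx s hs).2, hs⟩
    rw [hψ, hslice, Real.volume_setOf_sq_sub_lt, ENNReal.toReal_ofReal (by positivity)]
  obtain ⟨C, hψ_holder⟩ : ∃ C, HolderOnWith C (1 / 2) ψ Bset := ⟨_, fun x hx y hy => by
    rw [hψ_eq hx, hψ_eq hy]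
    exact holderOnWith_two_mul_sqrt_sub_dist_sq (δ ^ 2) z D x (hBD hx) y (hBD hy)⟩
  refine ⟨volume.real Bset * (2 * C), fun ε hε _ => ?_⟩
  have hε_rpow : ε ^ (-(1/2 : ℝ)) * ε ^ (1/2 : ℝ) = 1 := by
    rw [← Real.rpow_add hε]; norm_num
  calc ε ^ (-(1/2 : ℝ)) * ∫ x in Bset, essOsc ψ (volume.restrict (ball x ε ∩ Bset))
      ≤ ε ^ (-(1/2 : ℝ)) * (volume.real Bset * (2 * (C * ε ^ (1/2 : ℝ)))) := by
        gcongr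
        exact_mod_cast hψ_holder.setIntegral_essOsc_le hBcpt.measurableSet
          hBcpt.measure_lt_top.ne hε.le
    _ = volume.real Bset * (2 * C) := by
        linear_combination (volume.real Bset * (2 * C)) * hε_rpow

/-- The vertical-slice-length observable induced on the base by a Euclidean ball in the
flow space belongs to the quasi-Hölder space `V_{1/2}`. -/
theorem stmt19 (d : ℕ) (Bset : Set (EuclideanSpace ℝ (Fin d))) (hBcpt : IsCompact Bset)
    (R : ℝ) (hR : 1 ≤ R) (r : EuclideanSpace ℝ (Fin d) → ℝ)
    (hr : ∀ x, 1 ≤ r x ∧ r x ≤ R) (hrmeas : Measurable r)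
    (δ : ℝ) (hδ : 0 < δ) (z : EuclideanSpace ℝ (Fin d)) (u : ℝ)
    (hU : ∀ x ∈ Bset, ∀ s : ℝ, dist x z ^ 2 + (s - u) ^ 2 < δ ^ 2 → 0 ≤ s ∧ s ≤ r x)
    (ψ : EuclideanSpace ℝ (Fin d) → ℝ)
    (hψ : ∀ x, ψ x =
      (volume {s : ℝ | 0 ≤ s ∧ s ≤ r x ∧ dist x z ^ 2 + (s - u) ^ 2 < δ ^ 2}).toReal)
    (ε₀ : ℝ) (hε₀ : 0 < ε₀) :
    ∃ K : ℝ, ∀ ε : ℝ, 0 < ε → ε ≤ ε₀ →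
      ε ^ (-(1/2 : ℝ)) *
        ∫ x in Bset,
          (essSup ψ (volume.restrict (ball x ε ∩ Bset)) -
            essInf ψ (volume.restrict (ball x ε ∩ Bset))) ≤ K :=
  stmt19_general d Bset hBcpt r δ z u hU ψ hψ ε₀
end
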